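/- arXiv:1105.2913 — 2 statements merged into one kernel-verified Lean document; each statement's English description precedes it below -/
import Mathlib

section
/- Let a_1(x) ≤ a_2(x) ≤ ... ≤ a_n(x) be continuous real-valued functions on a connected topological space M, and suppose there is a function γ : [0,1) → ℝ such that for all x ∈ M and all t ∈ [0,1), ∏_{i=1}^n (1 + t·a_i(x)) = γ(t). Then each a_i is a constant function on M. -/
/-!
For `s > 1`, `s ^ n * ∏ (1 + s⁻¹ * a i x) = ∏ (s + a i x)`, so the monic polynomial with roots
`-a i x` takes the same values at every point of `(1, ∞)` for all `x`, hence does not depend on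
`x`. Its roots therefore give the same multiset `{a i x}` for every `x`, and a monotone tuple is
determined by its multiset of values.
-/

open Set Polynomial Finset

theorem Polynomial.roots_prod_X_add_C {R ι : Type*} [CommRing R] [IsDomain R]
    (s : Finset ι) (a : ι → R) :
    (∏ i ∈ s, (X + C (a i))).roots = s.val.map fun i => -a i := by
  simp_rw [← sub_neg_eq_add, ← map_neg C]
  rw [← roots_multiset_prod_X_sub_C (s.val.map fun i => -a i), Multiset.map_map]
  rfl

theorem Polynomial.eval_prod_X_add_C_eq_pow_mul_prod_one_add_mul {K ι : Type*} [Field K]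
    (s : Finset ι) (a : ι → K) {t : K} (ht : t ≠ 0) :
    (∏ i ∈ s, (X + C (a i))).eval t = t ^ #s * ∏ i ∈ s, (1 + t⁻¹ * a i) := by
  rw [eval_prod, ← prod_const, ← prod_mul_distrib]
  refine prod_congr rfl fun i _ => ?_
  simp only [eval_add, eval_X, eval_C]
  field_simp

theorem Polynomial.prod_X_add_C_eq_of_prod_one_add_mul_eq {ι : Type*} (s : Finset ι)
    {a b : ι → ℝ} (h : ∀ t ∈ Ioo (0 : ℝ) 1, ∏ i ∈ s, (1 + t * a i) = ∏ i ∈ s, (1 + t * b i)) :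
    ∏ i ∈ s, (X + C (a i)) = ∏ i ∈ s, (X + C (b i)) := by
  refine eq_of_infinite_eval_eq _ _ ((Ioi_infinite 1).mono fun t (ht : 1 < t) => ?_)
  have ht₀ : t ≠ 0 := by positivity
  have hinv : t⁻¹ ∈ Ioo (0 : ℝ) 1 := ⟨by positivity, inv_lt_one_of_one_lt₀ ht⟩
  simp only [mem_ofPred_eq, eval_prod_X_add_C_eq_pow_mul_prod_one_add_mul _ _ ht₀, h _ hinv]

theorem Fin.eq_of_monotone_of_map_univ_eq {α : Type*} [LinearOrder α] {n : ℕ}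
    {f g : Fin n → α} (hf : Monotone f) (hg : Monotone g)
    (h : univ.val.map f = univ.val.map g) : f = g := by
  simp only [Fin.univ_val_map, Multiset.coe_eq_coe] at h
  exact List.ofFn_injective <|
    h.eq_of_sortedLE (List.sortedLE_ofFn_iff.2 hf) (List.sortedLE_ofFn_iff.2 hg)

theorem eq_of_monotone_of_prod_one_add_mul_eq {n : ℕ} {a b : Fin n → ℝ}
    (ha : Monotone a) (hb : Monotone b)
    (h : ∀ t ∈ Ioo (0 : ℝ) 1, ∏ i, (1 + t * a i) = ∏ i, (1 + t * b i)) : a = b := by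
  have hroots := congrArg roots (prod_X_add_C_eq_of_prod_one_add_mul_eq univ h)
  rw [roots_prod_X_add_C, roots_prod_X_add_C] at hroots
  refine Fin.eq_of_monotone_of_map_univ_eq ha hb ?_
  simpa only [Multiset.map_map, Function.comp_def, neg_neg] using
    congrArg (Multiset.map Neg.neg) hroots

theorem stmt_0_general {M : Type*}
    {n : ℕ} (a : Fin n → M → ℝ)
    (hord : ∀ (x : M) (i j : Fin n), i ≤ j → a i x ≤ a j x)
    (γ : ℝ → ℝ)
    (hγ : ∀ x : M, ∀ t ∈ Ico (0 : ℝ) 1, ∏ i, (1 + t * a i x) = γ t) :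
    ∀ (i : Fin n) (x y : M), a i x = a i y := by
  intro i x y
  have hprod : ∀ t ∈ Ioo (0 : ℝ) 1, ∏ i, (1 + t * a i x) = ∏ i, (1 + t * a i y) :=
    fun t ht => (hγ x t (Ioo_subset_Ico_self ht)).trans (hγ y t (Ioo_subset_Ico_self ht)).symm
  exact congrFun (eq_of_monotone_of_prod_one_add_mul_eq (hord x) (hord y) hprod) i

/-- If continuous ordered functions `a 1 ≤ … ≤ a n` on a connected space `M` are such that
`∏ i, (1 + t * a i x)` is independent of `x` for every `t ∈ [0,1)`, then each `a i` is constant. -/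
theorem stmt_0 {M : Type*} [TopologicalSpace M] [ConnectedSpace M] [Nonempty M]
    {n : ℕ} (a : Fin n → M → ℝ) (hcont : ∀ i, Continuous (a i))
    (hord : ∀ (x : M) (i j : Fin n), i ≤ j → a i x ≤ a j x)
    (γ : ℝ → ℝ)
    (hγ : ∀ x : M, ∀ t ∈ Ico (0 : ℝ) 1, ∏ i, (1 + t * a i x) = γ t) :
    ∀ (i : Fin n) (x y : M), a i x = a i y :=
  stmt_0_general a hord γ hγ
end

section
/- Let A be an n×n Hermitian matrix. If det((1-t)·I + t·A) > 0 for all t ∈ [0,1), then A is positive semidefinite, and A is positive definite if and only if det A > 0. -/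
open Set Matrix
open scoped ComplexOrder

lemma det_combo {n : ℕ} (A : Matrix (Fin n) (Fin n) ℂ) (hA : A.IsHermitian) (t : ℝ) :
    (((1 - t : ℝ) : ℂ) • (1 : Matrix (Fin n) (Fin n) ℂ) + ((t : ℝ) : ℂ) • A).det
      = ((∏ i, ((1 - t) + t * hA.eigenvalues i) : ℝ) : ℂ) := by
  set U : Matrix (Fin n) (Fin n) ℂ := (hA.eigenvectorUnitary : Matrix (Fin n) (Fin n) ℂ)
  have hU : U * star U = 1 := Matrix.mem_unitaryGroup_iff.mp hA.eigenvectorUnitary.2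
  have hspec : A = U * Matrix.diagonal (RCLike.ofReal ∘ hA.eigenvalues) * star U :=
    hA.spectral_theorem
  have key : (((1 - t : ℝ) : ℂ) • (1 : Matrix (Fin n) (Fin n) ℂ) + ((t : ℝ) : ℂ) • A)
      = U * (((1 - t : ℝ) : ℂ) • (1 : Matrix (Fin n) (Fin n) ℂ)
          + ((t : ℝ) : ℂ) • Matrix.diagonal (RCLike.ofReal ∘ hA.eigenvalues)) * star U := by
    rw [Matrix.mul_add, Matrix.add_mul, Matrix.mul_smul, Matrix.mul_smul,
      Matrix.smul_mul, Matrix.smul_mul, Matrix.mul_one, hU, ← hspec]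
  rw [key, Matrix.det_mul, Matrix.det_mul, mul_comm, ← mul_assoc, ← Matrix.det_mul,
    Matrix.star_eq_conjTranspose, ← Matrix.star_eq_conjTranspose]
  rw [show star U * U = 1 from Matrix.mem_unitaryGroup_iff'.mp hA.eigenvectorUnitary.2]
  rw [Matrix.det_one, one_mul]
  have : (((1 - t : ℝ) : ℂ) • (1 : Matrix (Fin n) (Fin n) ℂ)
      + ((t : ℝ) : ℂ) • Matrix.diagonal (RCLike.ofReal ∘ hA.eigenvalues))
      = Matrix.diagonal (fun i => (((1 - t) + t * hA.eigenvalues i : ℝ) : ℂ)) := by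
    ext i j
    rcases eq_or_ne i j with rfl | hij
    · simp [Matrix.one_apply_eq, Matrix.diagonal_apply_eq]
    · simp [Matrix.one_apply_ne hij, Matrix.diagonal_apply_ne _ hij]
  rw [this, Matrix.det_diagonal]
  push_cast
  rfl

/-- If `A` is Hermitian and `det((1-t)·I + t·A) > 0` (as a real number) for all `t ∈ [0,1)`,
then `A` is positive semidefinite, and `A` is positive definite iff `det A > 0`. -/
theorem stmt_4 {n : ℕ} (A : Matrix (Fin n) (Fin n) ℂ) (hA : A.IsHermitian)
    (h : ∀ t ∈ Ico (0 : ℝ) 1,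
      0 < ((((1 - t : ℝ) : ℂ) • (1 : Matrix (Fin n) (Fin n) ℂ) + ((t : ℝ) : ℂ) • A).det).re) :
    A.PosSemidef ∧ (A.PosDef ↔ 0 < A.det.re) := by
  have h' : ∀ t ∈ Ico (0 : ℝ) 1, 0 < ∏ i, ((1 - t) + t * hA.eigenvalues i) := by
    intro t ht
    have := h t ht
    rwa [det_combo A hA t, Complex.ofReal_re] at this
  -- all eigenvalues are nonnegative
  have heig : ∀ i, 0 ≤ hA.eigenvalues i := by
    intro i
    by_contra hneg
    push_neg at hneg
    set lam := hA.eigenvalues i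
    have h1 : (1 : ℝ) < 1 - lam := by linarith
    set t0 := 1 / (1 - lam)
    have ht0 : t0 ∈ Ico (0 : ℝ) 1 := by
      constructor
      · positivity
      · rw [div_lt_one (by linarith)]; linarith
    have hfac : (1 - t0) + t0 * lam = 0 := by
      have : t0 * (1 - lam) = 1 := by
        field_simp [t0]
        simp [t0]; exact inv_mul_cancel₀ (by linarith)
      nlinarith
    have := h' t0 ht0
    rw [Finset.prod_eq_zero (Finset.mem_univ i) hfac] at this
    exact lt_irrefl 0 this
  have hpsd : A.PosSemidef := hA.posSemidef_iff_eigenvalues_nonneg.mpr (fun i => heig i)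
  have hdet : A.det.re = ∏ i, hA.eigenvalues i := by
    rw [hA.det_eq_prod_eigenvalues]
    norm_cast
  refine ⟨hpsd, ?_, ?_⟩
  · intro hpd
    have := hpd.det_pos
    rw [Complex.lt_def] at this
    simpa using this.1
  · intro hdetpos
    rw [hdet] at hdetpos
    have heigpos : ∀ i, 0 < hA.eigenvalues i := by
      intro i
      rcases lt_or_eq_of_le (heig i) with hlt | heq
      · exact hlt
      · exfalso
        rw [Finset.prod_eq_zero (Finset.mem_univ i) heq.symm] at hdetpos
        exact lt_irrefl 0 hdetpos
    have hdetne : A.det ≠ 0 := by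
      rw [hA.det_eq_prod_eigenvalues]
      norm_cast
      exact RCLike.ofReal_ne_zero.mpr (Finset.prod_pos fun i _ => heigpos i).ne'
    have hinj : Function.Injective A.mulVec :=
      Matrix.mulVec_injective_iff_isUnit.mpr ((Matrix.isUnit_iff_isUnit_det A).mpr hdetne.isUnit)
    refine Matrix.posDef_iff_dotProduct_mulVec.mpr ⟨hA, fun x hx => ?_⟩
    have hle : 0 ≤ star x ⬝ᵥ A *ᵥ x := (Matrix.posSemidef_iff_dotProduct_mulVec.mp hpsd).2 x
    refine lt_of_le_of_ne hle ?_
    intro heq0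
    apply hx
    have : A *ᵥ x = 0 := (hpsd.dotProduct_mulVec_zero_iff x).mp heq0.symm
    have h0 : A *ᵥ x = A *ᵥ 0 := by simpa using this
    exact hinj h0
end
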